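/- arXiv:1104.2224 — 5 statements merged into one kernel-verified Lean document; each statement's English description precedes it below -/
import Mathlib

section
/- Let S : X × A → ℝ be a 0-homogeneous proper scoring rule, i.e., S(x, λα) = S(x, α) for λ > 0, and Σ_x p_x S(x,q) ≥ Σ_x p_x S(x,p) for all p, q ∈ P. Define H(α) := Σ_x α_x S(x, α). Then H is 1-homogeneous, concave on A, and the vector (S(x,α))_x is a supergradient of H at each α ∈ A. -/
/-! Homogeneity lets one normalise any two positive vectors to probability vectors without
changing the scores, so properness becomes `H(β) ≤ Σ_x β_x S(x, α)` on all of `A`, with equality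
at `β = α`. Thus `H` is the pointwise infimum of the linear functions `β ↦ Σ_x β_x S(x, α)`:
it is concave and `(S(x, α))_x` is a supergradient at `α`. -/

open Finset

theorem ConcaveOn.of_le_linearMap {𝕜 E : Type*} [Field 𝕜] [LinearOrder 𝕜] [IsStrictOrderedRing 𝕜]
    [AddCommGroup E] [Module 𝕜 E] {s : Set E} (hs : Convex 𝕜 s) {f : E → 𝕜}
    (L : E → E →ₗ[𝕜] 𝕜) (h_eq : ∀ a ∈ s, f a = L a a) (h_le : ∀ a ∈ s, ∀ b ∈ s, f b ≤ L a b) :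
    ConcaveOn 𝕜 s f := by
  refine ⟨hs, fun x hx y hy a b ha hb hab => ?_⟩
  have hz : a • x + b • y ∈ s := hs hx hy ha hb hab
  calc a • f x + b • f y
      ≤ a • L (a • x + b • y) x + b • L (a • x + b • y) y := by
        gcongr
        exacts [h_le _ hz _ hx, h_le _ hz _ hy]
    _ = f (a • x + b • y) := by rw [h_eq _ hz, map_add, map_smul, map_smul]

theorem convex_setOf_forall_pos {X : Type*} : Convex ℝ {α : X → ℝ | ∀ x, 0 < α x} :=
  fun _ hα _ hβ _ _ ha hb hab x => convex_Ioi (0 : ℝ) (hα x) (hβ x) ha hb hab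

namespace ScoringRule

variable {X : Type*} [Fintype X]

def expectedScore (S : X → (X → ℝ) → ℝ) (α : X → ℝ) : (X → ℝ) →ₗ[ℝ] ℝ :=
  (dotProductBilin ℝ ℝ).flip fun x => S x α

theorem expectedScore_apply (S : X → (X → ℝ) → ℝ) (α β : X → ℝ) :
    expectedScore S α β = ∑ x, β x * S x α := rfl

theorem expectedScore_smul_left (S : X → (X → ℝ) → ℝ) {α : X → ℝ}
    (hhom : ∀ x, ∀ l : ℝ, 0 < l → S x (l • α) = S x α) {l : ℝ} (hl : 0 < l) (β : X → ℝ) :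
    expectedScore S (l • α) β = expectedScore S α β := by
  simp only [expectedScore_apply, hhom _ l hl]

theorem expectedScore_self_le {S : X → (X → ℝ) → ℝ}
    (hhom : ∀ x, ∀ l : ℝ, 0 < l → ∀ α : X → ℝ, (∀ y, 0 < α y) → S x (l • α) = S x α)
    (hproper : ∀ p q : X → ℝ, (∀ x, 0 < p x) → ∑ x, p x = 1 →
      (∀ x, 0 < q x) → ∑ x, q x = 1 → ∑ x, p x * S x p ≤ ∑ x, p x * S x q)
    {α β : X → ℝ} (hα : ∀ x, 0 < α x) (hβ : ∀ x, 0 < β x) :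
    expectedScore S β β ≤ expectedScore S α β := by
  rcases isEmpty_or_nonempty X with _ | _
  · simp [expectedScore_apply]
  have normalize : ∀ γ : X → ℝ, (∀ x, 0 < γ x) →
      0 < (∑ x, γ x)⁻¹ ∧ (∀ x, 0 < ((∑ x, γ x)⁻¹ • γ) x) ∧ ∑ x, ((∑ x, γ x)⁻¹ • γ) x = 1 := by
    intro γ hγ
    have hsum : 0 < ∑ x, γ x := sum_pos (fun x _ => hγ x) univ_nonempty
    refine ⟨inv_pos.mpr hsum, fun x => mul_pos (inv_pos.mpr hsum) (hγ x), ?_⟩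
    simp only [Pi.smul_apply, smul_eq_mul, ← mul_sum, inv_mul_cancel₀ hsum.ne']
  obtain ⟨hb, hp, hp_sum⟩ := normalize β hβ
  obtain ⟨ha, hq, hq_sum⟩ := normalize α hα
  have h := hproper _ _ hp hp_sum hq hq_sum
  rw [← expectedScore_apply, ← expectedScore_apply, map_smul, map_smul,
    expectedScore_smul_left S (fun x l hl => hhom x l hl β hβ) hb,
    expectedScore_smul_left S (fun x l hl => hhom x l hl α hα) ha] at h
  exact le_of_smul_le_smul_left h hb

end ScoringRule

open ScoringRule in
/-- A 0-homogeneous proper scoring rule determines a 1-homogeneous concave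
entropy function of which it is a supergradient. -/
theorem stmt_5 {X : Type*} [Fintype X]
    (S : X → (X → ℝ) → ℝ)
    (hhom : ∀ x, ∀ l : ℝ, 0 < l → ∀ α : X → ℝ, (∀ y, 0 < α y) →
      S x (l • α) = S x α)
    (hproper : ∀ p q : X → ℝ, (∀ x, 0 < p x) → ∑ x, p x = 1 →
      (∀ x, 0 < q x) → ∑ x, q x = 1 →
      ∑ x, p x * S x p ≤ ∑ x, p x * S x q) :
    (∀ l : ℝ, 0 < l → ∀ α : X → ℝ, (∀ x, 0 < α x) →
        ∑ x, (l • α) x * S x (l • α) = l * ∑ x, α x * S x α)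
    ∧ ConcaveOn ℝ {α : X → ℝ | ∀ x, 0 < α x} (fun α => ∑ x, α x * S x α)
    ∧ (∀ α : X → ℝ, (∀ x, 0 < α x) → ∀ β : X → ℝ, (∀ x, 0 < β x) →
        ∑ x, β x * S x β ≤ (∑ x, α x * S x α) + ∑ x, (β x - α x) * S x α) := by
  have self_le : ∀ α β : X → ℝ, (∀ x, 0 < α x) → (∀ x, 0 < β x) →
      expectedScore S β β ≤ expectedScore S α β :=
    fun _ _ hα hβ => expectedScore_self_le hhom hproper hα hβ
  refine ⟨fun l hl α hα => ?_, ?_, fun α hα β hβ => ?_⟩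
  · change expectedScore S (l • α) (l • α) = l * expectedScore S α α
    rw [expectedScore_smul_left S (fun x l hl => hhom x l hl α hα) hl, map_smul, smul_eq_mul]
  · exact .of_le_linearMap convex_setOf_forall_pos (expectedScore S) (fun _ _ => rfl)
      fun α hα β hβ => self_le α β hα hβ
  · have h_split : expectedScore S α β = expectedScore S α α + expectedScore S α (β - α) := by
      rw [← map_add, add_sub_cancel]
    simpa only [h_split, expectedScore_apply, Pi.sub_apply] using self_le α β hα hβ
end

section
/- If S is a 0-homogeneous proper scoring rule on a finite sample space X and for each x the map α ↦ S(x, α) is continuously differentiable on the open positive orthant A, then the partial derivatives satisfy ∂S(x,α)/∂α_y = ∂S(y,α)/∂α_x for all x, y ∈ X and α ∈ A. -/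
/-!
By homogeneity, properness says that for every `α` in the open orthant the map
`q ↦ ∑ x, α x * S x q` attains its minimum over the orthant at `q = α`, so
`∑ x, α x • D S(x, ·)(α) = 0`. By the product rule the expected score
`H α = ∑ x, α x * S x α` therefore has gradient `(S x α)ₓ` on the orthant, and the claimed
identity is the symmetry of the second derivative of `H`.
-/

open Filter Topology ContinuousLinearMap

section

variable {X : Type*} [Fintype X]

lemma eventually_forall_pos_nhds {α : X → ℝ} (hα : ∀ z, 0 < α z) :
    ∀ᶠ β in 𝓝 α, ∀ z, 0 < β z :=
  eventually_all.2 fun z => continuousAt_const.eventually_lt (continuous_apply z).continuousAt (hα z)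

lemma inv_sum_smul_pos_and_sum_eq_one [Nonempty X] {α : X → ℝ} (hα : ∀ z, 0 < α z) :
    (∀ z, 0 < ((∑ z, α z)⁻¹ • α) z) ∧ ∑ z, ((∑ z, α z)⁻¹ • α) z = 1 := by
  have hs : 0 < ∑ z, α z := Finset.sum_pos (fun z _ => hα z) Finset.univ_nonempty
  refine ⟨fun z => mul_pos (inv_pos.2 hs) (hα z), ?_⟩
  simp only [Pi.smul_apply, smul_eq_mul, ← Finset.mul_sum]
  exact inv_mul_cancel₀ hs.ne'

lemma sum_mul_le_sum_mul_of_proper [Nonempty X] {S : X → (X → ℝ) → ℝ}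
    (hhom : ∀ x, ∀ l : ℝ, 0 < l → ∀ α : X → ℝ, (∀ y, 0 < α y) → S x (l • α) = S x α)
    (hproper : ∀ p q : X → ℝ, (∀ x, 0 < p x) → ∑ x, p x = 1 →
      (∀ x, 0 < q x) → ∑ x, q x = 1 → ∑ x, p x * S x p ≤ ∑ x, p x * S x q)
    {α q : X → ℝ} (hα : ∀ z, 0 < α z) (hq : ∀ z, 0 < q z) :
    ∑ x, α x * S x α ≤ ∑ x, α x * S x q := by
  have inv_sum_pos {β : X → ℝ} (hβ : ∀ z, 0 < β z) : 0 < (∑ z, β z)⁻¹ :=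
    inv_pos.2 (Finset.sum_pos (fun z _ => hβ z) Finset.univ_nonempty)
  obtain ⟨hp, hp_sum⟩ := inv_sum_smul_pos_and_sum_eq_one hα
  obtain ⟨hq', hq'_sum⟩ := inv_sum_smul_pos_and_sum_eq_one hq
  have key := hproper _ _ hp hp_sum hq' hq'_sum
  simp only [hhom _ _ (inv_sum_pos hα) _ hα, hhom _ _ (inv_sum_pos hq) _ hq,
    Pi.smul_apply, smul_eq_mul, mul_assoc, ← Finset.mul_sum] at key
  exact le_of_mul_le_mul_left key (inv_sum_pos hα)

lemma sum_smul_fderiv_eq_zero_of_proper [Nonempty X] {S : X → (X → ℝ) → ℝ}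
    (hhom : ∀ x, ∀ l : ℝ, 0 < l → ∀ α : X → ℝ, (∀ y, 0 < α y) → S x (l • α) = S x α)
    (hproper : ∀ p q : X → ℝ, (∀ x, 0 < p x) → ∑ x, p x = 1 →
      (∀ x, 0 < q x) → ∑ x, q x = 1 → ∑ x, p x * S x p ≤ ∑ x, p x * S x q)
    {α : X → ℝ} (hα : ∀ z, 0 < α z) (hS : ∀ x, DifferentiableAt ℝ (S x) α) :
    ∑ x, α x • fderiv ℝ (S x) α = 0 := by
  have hmin : IsLocalMin (fun q => ∑ x, α x * S x q) α := by
    filter_upwards [eventually_forall_pos_nhds hα] with q hq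
    exact sum_mul_le_sum_mul_of_proper hhom hproper hα hq
  exact hmin.hasFDerivAt_eq_zero
    (HasFDerivAt.fun_sum fun x _ => ((hS x).hasFDerivAt.const_mul (α x)))

lemma hasFDerivAt_sum_mul_self {g : X → (X → ℝ) → ℝ} {β : X → ℝ}
    (hg : ∀ x, DifferentiableAt ℝ (g x) β) :
    HasFDerivAt (fun γ => ∑ x, γ x * g x γ)
      (∑ x, β x • fderiv ℝ (g x) β + ∑ x, g x β • (proj x : (X → ℝ) →L[ℝ] ℝ)) β := by
  rw [← Finset.sum_add_distrib]
  exact HasFDerivAt.fun_sum fun x _ => by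
    simpa only [add_comm] using (hasFDerivAt_apply x β).fun_mul (hg x).hasFDerivAt

lemma fderiv_apply_single_comm_of_gradient [DecidableEq X] {H : (X → ℝ) → ℝ}
    {g : X → (X → ℝ) → ℝ} {α : X → ℝ}
    (hH : ∀ᶠ β in 𝓝 α, HasFDerivAt H (∑ x, g x β • (proj x : (X → ℝ) →L[ℝ] ℝ)) β)
    (hg : ∀ x, DifferentiableAt ℝ (g x) α) (x y : X) :
    fderiv ℝ (g x) α (Pi.single y 1) = fderiv ℝ (g y) α (Pi.single x 1) := by
  have hsymm := second_derivative_symmetric_of_eventually hH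
    (HasFDerivAt.fun_sum fun z _ => (hg z).hasFDerivAt.smul_const (proj z : (X → ℝ) →L[ℝ] ℝ))
    (Pi.single y 1) (Pi.single x 1)
  simpa [Pi.single_apply] using hsymm

end

/-- Symmetry of the partial derivatives of a continuously differentiable
0-homogeneous proper scoring rule. -/
theorem stmt_6 {X : Type*} [Fintype X] [DecidableEq X]
    (S : X → (X → ℝ) → ℝ)
    (hhom : ∀ x, ∀ l : ℝ, 0 < l → ∀ α : X → ℝ, (∀ y, 0 < α y) →
      S x (l • α) = S x α)
    (hproper : ∀ p q : X → ℝ, (∀ x, 0 < p x) → ∑ x, p x = 1 →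
      (∀ x, 0 < q x) → ∑ x, q x = 1 →
      ∑ x, p x * S x p ≤ ∑ x, p x * S x q)
    (hdiff : ∀ x, ∀ α : X → ℝ, (∀ y, 0 < α y) → ContDiffAt ℝ 1 (S x) α) :
    ∀ x y, ∀ α : X → ℝ, (∀ z, 0 < α z) →
      fderiv ℝ (S x) α (Pi.single y 1) = fderiv ℝ (S y) α (Pi.single x 1) := by
  intro x y α hα
  have : Nonempty X := ⟨x⟩
  have hS {β : X → ℝ} (hβ : ∀ z, 0 < β z) (z : X) : DifferentiableAt ℝ (S z) β :=
    (hdiff z β hβ).differentiableAt one_ne_zero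
  refine fderiv_apply_single_comm_of_gradient (H := fun β => ∑ z, β z * S z β) ?_ (hS hα) x y
  filter_upwards [eventually_forall_pos_nhds hα] with β hβ
  simpa only [sum_smul_fderiv_eq_zero_of_proper hhom hproper hβ (hS hβ), zero_add] using
    hasFDerivAt_sum_mul_self (hS hβ)
end

section
/- Let X = X₁ × ⋯ × X_k be a finite product space and for each i let S_i be a strictly proper scoring rule on X_i. Define S(x, p) = Σ_{i=1}^k S_i(x_i, p(· | X^{∖i} = x^{∖i})), where p(· | X^{∖i} = x^{∖i}) denotes the conditional distribution of the i-th coordinate given the others. Then S is a strictly proper scoring rule on X (over strictly positive distributions): Σ_x p_x S(x,q) ≥ Σ_x p_x S(x,p) with equality iff q = p. -/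
/-!
Split the sum over `x` into the fibres of the coordinates other than `i`. On each fibre the
`i`-th term is the expected score of the (unnormalized) slice of `p` against the conditional
forecast of `q`, so strict properness of `S i` gives the inequality fibre by fibre. If equality
holds, every conditional of `q` equals that of `p`; then `q / p` does not change when a single
coordinate changes, so it is constant, and as `p`, `q` both sum to `1` it equals `1`.
-/

namespace ScoringRule

open Finset Function

section Weights

variable {Y : Type*} [Fintype Y]

noncomputable def normalized (a : Y → ℝ) (u : Y) : ℝ := a u / ∑ v, a v

def IsStrictlyProper (T : Y → (Y → ℝ) → ℝ) : Prop :=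
  ∀ r s : Y → ℝ, (∀ u, 0 < r u) → ∑ u, r u = 1 → (∀ u, 0 < s u) → ∑ u, s u = 1 →
    (∑ u, r u * T u r ≤ ∑ u, r u * T u s) ∧ (∑ u, r u * T u s = ∑ u, r u * T u r ↔ s = r)

variable {a b : Y → ℝ}

lemma normalized_pos (ha : ∀ u, 0 < a u) (u : Y) : 0 < normalized a u :=
  div_pos (ha u) (sum_pos (fun v _ => ha v) ⟨u, mem_univ u⟩)

lemma sum_normalized [Nonempty Y] (ha : ∀ u, 0 < a u) : ∑ u, normalized a u = 1 := by
  simp_rw [normalized, ← sum_div]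
  exact div_self (sum_pos (fun v _ => ha v) univ_nonempty).ne'

lemma sum_mul_eq_sum_mul_sum_normalized [Nonempty Y] (ha : ∀ u, 0 < a u) (f : Y → ℝ) :
    ∑ u, a u * f u = (∑ v, a v) * ∑ u, normalized a u * f u := by
  have hA : (∑ v, a v) ≠ 0 := (sum_pos (fun v _ => ha v) univ_nonempty).ne'
  rw [mul_sum]
  refine sum_congr rfl fun u _ => ?_
  rw [normalized, ← mul_assoc, mul_div_cancel₀ _ hA]

lemma div_eq_sum_div_sum_of_normalized_eq (ha : ∀ u, 0 < a u) (hb : ∀ u, 0 < b u)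
    (h : normalized b = normalized a) (u : Y) : b u / a u = (∑ v, b v) / ∑ v, a v := by
  have hA : 0 < ∑ v, a v := sum_pos (fun v _ => ha v) ⟨u, mem_univ u⟩
  have hB : 0 < ∑ v, b v := sum_pos (fun v _ => hb v) ⟨u, mem_univ u⟩
  have hu := congrFun h u
  rw [normalized, normalized, div_eq_div_iff hB.ne' hA.ne'] at hu
  rw [div_eq_div_iff (ha u).ne' hA.ne']
  linarith

theorem IsStrictlyProper.sum_mul_normalized {T : Y → (Y → ℝ) → ℝ} (hT : IsStrictlyProper T)
    (ha : ∀ u, 0 < a u) (hb : ∀ u, 0 < b u) :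
    (∑ u, a u * T u (normalized a) ≤ ∑ u, a u * T u (normalized b)) ∧
    (∑ u, a u * T u (normalized b) = ∑ u, a u * T u (normalized a) ↔
      normalized b = normalized a) := by
  rcases isEmpty_or_nonempty Y with hY | hY
  · simp only [univ_eq_empty, sum_empty, le_refl, true_and, true_iff]
    exact funext fun u => hY.elim u
  obtain ⟨hle, heq⟩ := hT _ _ (normalized_pos ha) (sum_normalized ha)
    (normalized_pos hb) (sum_normalized hb)
  have hA : 0 < ∑ v, a v := sum_pos (fun v _ => ha v) univ_nonempty
  simp only [sum_mul_eq_sum_mul_sum_normalized ha]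
  exact ⟨mul_le_mul_of_nonneg_left hle hA.le, (mul_right_inj' hA.ne').trans heq⟩

lemma eq_of_div_eq_div_of_sum_eq {p q : Y → ℝ} (hp : ∀ x, 0 < p x)
    (hc : ∀ x y, q x / p x = q y / p y) (hs : ∑ x, q x = ∑ x, p x) : q = p := by
  funext x
  have hq : ∀ y, q y = q x / p x * p y := fun y => by
    rw [hc x y, div_mul_cancel₀ _ (hp y).ne']
  have hP : 0 < ∑ y, p y := sum_pos (fun y _ => hp y) ⟨x, mem_univ x⟩
  have hsum : ∑ y, q y = q x / p x * ∑ y, p y := by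
    rw [mul_sum]
    exact sum_congr rfl fun y _ => hq y
  have hc1 : q x / p x = 1 := (mul_eq_right₀ hP.ne').1 (hsum.symm.trans hs)
  rw [hq x, hc1, one_mul]

end Weights

section Product

variable {ι : Type*} [DecidableEq ι] {X : ι → Type*}

lemma update_piSplitAt_symm (i : ι) (u u' : X i) (w : ∀ j : {j // j ≠ i}, X j) :
    update ((Equiv.piSplitAt i X).symm (u, w)) i u' = (Equiv.piSplitAt i X).symm (u', w) := by
  funext j
  rcases eq_or_ne j i with rfl | h
  · simp
  · simp [h]

lemma update_eq_piSplitAt_symm (x : ∀ j, X j) (i : ι) (u : X i) :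
    update x i u = (Equiv.piSplitAt i X).symm (u, fun j => x j) := by
  conv_lhs => rw [← (Equiv.piSplitAt i X).symm_apply_apply x]
  rw [Equiv.piSplitAt_apply, update_piSplitAt_symm]

lemma eq_of_forall_update_eq [Fintype ι] {β : Type*} {f : (∀ j, X j) → β}
    (hf : ∀ x i u, f (update x i u) = f x) (x y : ∀ j, X j) : f x = f y := by
  have key : ∀ s : Finset ι, f (s.piecewise y x) = f x := by
    intro s
    induction s using Finset.induction_on with
    | empty => simp
    | insert j s _ ih => rw [piecewise_insert, hf, ih]
  simpa using (key univ).symm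

variable [∀ i, Fintype (X i)]

/-- `condDist d x i` is the conditional distribution `d(· | X^{∖i} = x^{∖i})`. -/
noncomputable def condDist (d : (∀ j, X j) → ℝ) (x : ∀ j, X j) (i : ι) : X i → ℝ :=
  normalized fun u => d (update x i u)

variable {i : ι} {T : X i → (X i → ℝ) → ℝ} {p q : (∀ j, X j) → ℝ}

lemma div_update_eq_of_condDist_eq (hp : ∀ x, 0 < p x) (hq : ∀ x, 0 < q x) {x : ∀ j, X j}
    (h : condDist q x i = condDist p x i) (u : X i) :
    q (update x i u) / p (update x i u) = q x / p x := by
  have hratio := div_eq_sum_div_sum_of_normalized_eq (fun v => hp (update x i v))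
    (fun v => hq (update x i v)) h
  have := (hratio u).trans (hratio (x i)).symm
  rwa [update_eq_self] at this

variable [Fintype ι]

lemma sum_eq_sum_sum_piSplitAt_symm {M : Type*} [AddCommMonoid M] (i : ι)
    (F : (∀ j, X j) → M) :
    ∑ x, F x = ∑ w : (∀ j : {j // j ≠ i}, X j), ∑ u, F ((Equiv.piSplitAt i X).symm (u, w)) := by
  rw [← Equiv.sum_comp (Equiv.piSplitAt i X).symm F, Fintype.sum_prod_type, sum_comm]

lemma sum_mul_condDist_eq (i : ι) (T : X i → (X i → ℝ) → ℝ) (p d : (∀ j, X j) → ℝ) :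
    ∑ x, p x * T (x i) (condDist d x i) =
      ∑ w : (∀ j : {j // j ≠ i}, X j), ∑ u, p ((Equiv.piSplitAt i X).symm (u, w)) *
        T u (normalized fun u' => d ((Equiv.piSplitAt i X).symm (u', w))) := by
  rw [sum_eq_sum_sum_piSplitAt_symm i]
  simp [condDist, update_piSplitAt_symm]

theorem IsStrictlyProper.sum_mul_condDist_le (hT : IsStrictlyProper T) (hp : ∀ x, 0 < p x)
    (hq : ∀ x, 0 < q x) :
    ∑ x, p x * T (x i) (condDist p x i) ≤ ∑ x, p x * T (x i) (condDist q x i) := by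
  rw [sum_mul_condDist_eq, sum_mul_condDist_eq]
  exact sum_le_sum fun w _ => (hT.sum_mul_normalized (fun _ => hp _) (fun _ => hq _)).1

theorem IsStrictlyProper.condDist_eq_of_sum_mul_condDist_eq (hT : IsStrictlyProper T)
    (hp : ∀ x, 0 < p x) (hq : ∀ x, 0 < q x)
    (h : ∑ x, p x * T (x i) (condDist q x i) = ∑ x, p x * T (x i) (condDist p x i))
    (x : ∀ j, X j) : condDist q x i = condDist p x i := by
  have hfiber w := hT.sum_mul_normalized (a := fun u => p ((Equiv.piSplitAt i X).symm (u, w)))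
    (b := fun u => q ((Equiv.piSplitAt i X).symm (u, w))) (fun _ => hp _) (fun _ => hq _)
  rw [sum_mul_condDist_eq, sum_mul_condDist_eq, eq_comm,
    sum_eq_sum_iff_of_le fun w _ => (hfiber w).1] at h
  simp only [condDist, update_eq_piSplitAt_symm x i]
  exact (hfiber _).2.1 (h _ (mem_univ _)).symm

end Product

end ScoringRule

theorem stmt_12_general {k : ℕ} (X : Fin k → Type*)
    [∀ i, Fintype (X i)]
    (S : (i : Fin k) → X i → (X i → ℝ) → ℝ)
    (hstrict : ∀ i, ∀ r s : X i → ℝ, (∀ u, 0 < r u) → ∑ u, r u = 1 →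
      (∀ u, 0 < s u) → ∑ u, s u = 1 →
      (∑ u, r u * S i u r ≤ ∑ u, r u * S i u s)
      ∧ (∑ u, r u * S i u s = ∑ u, r u * S i u r ↔ s = r))
    (p q : (∀ i, X i) → ℝ)
    (hp : ∀ x, 0 < p x) (hp1 : ∑ x, p x = 1)
    (hq : ∀ x, 0 < q x) (hq1 : ∑ x, q x = 1) :
    (∑ x, p x * ∑ i, S i (x i)
        (fun u => q (Function.update x i u) / ∑ v, q (Function.update x i v))
      ≥ ∑ x, p x * ∑ i, S i (x i)
        (fun u => p (Function.update x i u) / ∑ v, p (Function.update x i v)))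
    ∧ (∑ x, p x * ∑ i, S i (x i)
        (fun u => q (Function.update x i u) / ∑ v, q (Function.update x i v))
      = ∑ x, p x * ∑ i, S i (x i)
        (fun u => p (Function.update x i u) / ∑ v, p (Function.update x i v))
      ↔ q = p) := by
  have hS : ∀ i, ScoringRule.IsStrictlyProper (S i) := hstrict
  have hswap d : ∑ x, p x * ∑ i, S i (x i) (ScoringRule.condDist d x i)
      = ∑ i, ∑ x, p x * S i (x i) (ScoringRule.condDist d x i) := by
    simp_rw [Finset.mul_sum]
    exact Finset.sum_comm
  have hle i := (hS i).sum_mul_condDist_le hp hq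
  change (∑ x, p x * ∑ i, S i (x i) (ScoringRule.condDist q x i)
      ≥ ∑ x, p x * ∑ i, S i (x i) (ScoringRule.condDist p x i)) ∧
    (∑ x, p x * ∑ i, S i (x i) (ScoringRule.condDist q x i)
      = ∑ x, p x * ∑ i, S i (x i) (ScoringRule.condDist p x i) ↔ q = p)
  rw [hswap, hswap]
  refine ⟨Finset.sum_le_sum fun i _ => hle i, fun h => ?_, fun h => h ▸ rfl⟩
  rw [eq_comm, Finset.sum_eq_sum_iff_of_le fun i _ => hle i] at h
  have hcond x i : ScoringRule.condDist q x i = ScoringRule.condDist p x i :=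
    (hS i).condDist_eq_of_sum_mul_condDist_eq hp hq (h i (Finset.mem_univ i)).symm x
  refine ScoringRule.eq_of_div_eq_div_of_sum_eq hp ?_ (hq1.trans hp1.symm)
  exact ScoringRule.eq_of_forall_update_eq fun x i u =>
    ScoringRule.div_update_eq_of_condDist_eq hp hq (hcond x i) u

/-- A sum of strictly proper scoring rules applied to full conditional
distributions on a finite product space is strictly proper. -/
theorem stmt_12 {k : ℕ} (X : Fin k → Type*)
    [∀ i, Fintype (X i)] [∀ i, DecidableEq (X i)] [∀ i, Nontrivial (X i)]
    (S : (i : Fin k) → X i → (X i → ℝ) → ℝ)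
    (hstrict : ∀ i, ∀ r s : X i → ℝ, (∀ u, 0 < r u) → ∑ u, r u = 1 →
      (∀ u, 0 < s u) → ∑ u, s u = 1 →
      (∑ u, r u * S i u r ≤ ∑ u, r u * S i u s)
      ∧ (∑ u, r u * S i u s = ∑ u, r u * S i u r ↔ s = r))
    (p q : (∀ i, X i) → ℝ)
    (hp : ∀ x, 0 < p x) (hp1 : ∑ x, p x = 1)
    (hq : ∀ x, 0 < q x) (hq1 : ∑ x, q x = 1) :
    (∑ x, p x * ∑ i, S i (x i)
        (fun u => q (Function.update x i u) / ∑ v, q (Function.update x i v))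
      ≥ ∑ x, p x * ∑ i, S i (x i)
        (fun u => p (Function.update x i u) / ∑ v, p (Function.update x i v)))
    ∧ (∑ x, p x * ∑ i, S i (x i)
        (fun u => q (Function.update x i u) / ∑ v, q (Function.update x i v))
      = ∑ x, p x * ∑ i, S i (x i)
        (fun u => p (Function.update x i u) / ∑ v, p (Function.update x i v))
      ↔ q = p) :=
  stmt_12_general X S hstrict p q hp hp1 hq hq1
end

section
/- Two strictly positive probability distributions p, q on a finite product space X = X₁ × ⋯ × X_k are equal if and only if all their full conditional distributions agree: for each i and each x ∈ X, p(X_i = · | X^{∖i} = x^{∖i}) = q(X_i = · | X^{∖i} = x^{∖i}). -/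
/-!
Agreement of the conditionals of `X_i` given the other coordinates says exactly that the
likelihood ratio `p / q` does not change when one coordinate is changed. Since any point of
the product is reached from any other by changing one coordinate at a time, `p / q` is a
constant `c`, and summing `p = c • q` forces `c = 1`.
-/

open Finset Function

lemma mul_eq_mul_of_div_sum_eq {ι : Type*} [Fintype ι] {f g : ι → ℝ}
    (hf : ∑ v, f v ≠ 0) (hg : ∑ v, g v ≠ 0)
    (h : (fun u => f u / ∑ v, f v) = fun u => g u / ∑ v, g v) (u a : ι) :
    f u * g a = f a * g u := by
  have hu := (div_eq_div_iff hf hg).mp (congrFun h u)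
  have ha := (div_eq_div_iff hf hg).mp (congrFun h a)
  refine mul_right_cancel₀ hg ?_
  linear_combination g a * hu - g u * ha

lemma eq_of_forall_update_eq {ι : Type*} [Fintype ι] [DecidableEq ι] {β : ι → Type*}
    {γ : Type*} {f : (∀ i, β i) → γ} (hf : ∀ x i u, f (update x i u) = f x) (x y : ∀ i, β i) :
    f x = f y := by
  have hpiecewise : ∀ s : Finset ι, f (s.piecewise x y) = f y := by
    intro s
    induction s using Finset.induction_on with
    | empty => rw [piecewise_empty]
    | insert j s _ ih => rw [piecewise_insert, hf, ih]
  simpa using hpiecewise univ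

lemma eq_of_div_eq_of_sum_eq_one {α : Type*} [Fintype α] {p q : α → ℝ} (hq : ∀ x, q x ≠ 0)
    (hp1 : ∑ x, p x = 1) (hq1 : ∑ x, q x = 1) (h : ∀ x y, p x / q x = p y / q y) : p = q := by
  funext y
  have hcross : ∀ x, q x * p y = p x * q y := fun x => by
    rw [mul_comm]
    exact ((div_eq_div_iff (hq x) (hq y)).mp (h x y)).symm
  calc p y = ∑ x, q x * p y := by rw [← sum_mul, hq1, one_mul]
    _ = ∑ x, p x * q y := sum_congr rfl fun x _ => hcross x
    _ = q y := by rw [← sum_mul, hp1, one_mul]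

/-- Two strictly positive distributions on a finite product space are equal
iff all their full conditional distributions agree. -/
theorem stmt_13 {k : ℕ} (X : Fin k → Type*)
    [∀ i, Fintype (X i)] [∀ i, DecidableEq (X i)]
    (p q : (∀ i, X i) → ℝ)
    (hp : ∀ x, 0 < p x) (hp1 : ∑ x, p x = 1)
    (hq : ∀ x, 0 < q x) (hq1 : ∑ x, q x = 1) :
    p = q ↔ ∀ (i : Fin k) (x : ∀ j, X j),
      (fun u => p (Function.update x i u) / ∑ v, p (Function.update x i v))
      = (fun u => q (Function.update x i u) / ∑ v, q (Function.update x i v)) := by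
  refine ⟨by rintro rfl i x; rfl, fun h => ?_⟩
  have hfiber_pos : ∀ (r : (∀ i, X i) → ℝ), (∀ x, 0 < r x) →
      ∀ i x, ∑ v, r (update x i v) ≠ 0 := fun r hr i x =>
    (sum_pos (fun v _ => hr _) ⟨x i, mem_univ _⟩).ne'
  have hratio_update : ∀ x i u, p (update x i u) / q (update x i u) = p x / q x := by
    intro x i u
    have := mul_eq_mul_of_div_sum_eq (hfiber_pos p hp i x) (hfiber_pos q hq i x) (h i x) u (x i)
    rw [update_eq_self] at this
    exact (div_eq_div_iff (hq _).ne' (hq x).ne').mpr this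
  exact eq_of_div_eq_of_sum_eq_one (fun x => (hq x).ne') hp1 hq1
    (eq_of_forall_update_eq (f := fun x => p x / q x) hratio_update)
end

section
/- Let G be an undirected graph on a finite set X and H : A → ℝ a twice continuously differentiable function on the positive orthant A such that ∂²H/∂α_x∂α_y = 0 whenever x ≠ y and x, y are not adjacent in G. Then H admits an additive decomposition H(α) = Σ_{B complete in G} h_B(α_B), where the sum is over complete subsets B of G and each h_B depends only on the coordinates α_B. -/
/-!
Freeze all coordinates outside `A` at the base point `1` and put `η A = H (A.piecewise α 1)`.
Möbius inversion on the subset lattice writes `H α = η univ` as the sum over all `B` of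
`h B = ∑_{A ⊆ B} (-1)^|B \ A| η A`, and `h B` only sees the coordinates in `B`. If `B` contains
two non-adjacent vertices `x ≠ y`, the terms of `h B` pair up into second differences of `H` in the
directions `x` and `y`; these vanish because `∂²H/∂α_x∂α_y = 0` on the (open, coordinatewise
convex) positive orthant, so only complete `B` contribute.
-/

open Finset Function

section Moebius

variable {ι R : Type*} [DecidableEq ι] [CommRing R]

def subsetMoebius (f : Finset ι → R) (B : Finset ι) : R :=
  ∑ A ∈ B.powerset, (-1) ^ #(B \ A) * f A

theorem subsetMoebius_insert (f : Finset ι → R) {x : ι} {B : Finset ι} (hx : x ∉ B) :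
    subsetMoebius f (insert x B) = subsetMoebius (fun A => f (insert x A) - f A) B := by
  rw [subsetMoebius, subsetMoebius, sum_powerset_insert hx, ← sum_add_distrib]
  refine sum_congr rfl fun A hA => ?_
  have hxA : x ∉ A := fun h => hx (mem_powerset.mp hA h)
  rw [insert_sdiff_of_notMem _ hxA, card_insert_of_notMem (by simp [hx]), insert_sdiff_insert,
    sdiff_insert_of_notMem hx]
  ring

theorem sum_subsetMoebius_powerset (f : Finset ι → R) (S : Finset ι) :
    ∑ B ∈ S.powerset, subsetMoebius f B = f S := by
  induction S using Finset.induction_on generalizing f with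
  | empty => simp [subsetMoebius]
  | insert x S hx ih =>
    rw [sum_powerset_insert hx, ih, sum_congr rfl fun B hB =>
      subsetMoebius_insert f fun h => hx (mem_powerset.mp hB h), ih]
    ring

theorem subsetMoebius_eq_zero {f : Finset ι → R} {x y : ι} {B : Finset ι} (hxy : x ≠ y)
    (hx : x ∈ B) (hy : y ∈ B)
    (hf : ∀ A, x ∉ A → y ∉ A →
      f (insert x (insert y A)) - f (insert x A) - f (insert y A) + f A = 0) :
    subsetMoebius f B = 0 := by
  set C := (B.erase x).erase y
  have hyC : y ∉ C := notMem_erase _ _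
  have hxC : x ∉ insert y C := by simp [C, hxy]
  have hB : B = insert x (insert y C) := by
    rw [insert_erase (mem_erase.mpr ⟨hxy.symm, hy⟩), insert_erase hx]
  rw [hB, subsetMoebius_insert _ hxC, subsetMoebius_insert _ hyC]
  refine sum_eq_zero fun A hA => ?_
  have hAC := mem_powerset.mp hA
  linear_combination (-1) ^ #(C \ A) *
    hf A (fun h => hxC (mem_insert_of_mem (hAC h))) (fun h => hyC (hAC h))

end Moebius

theorem sub_sub_add_eq_zero_of_hasDerivAt {f g : ℝ → ℝ → ℝ} {I J : Set ℝ}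
    (hI : IsOpen I) (hI' : IsPreconnected I) (hJ : IsOpen J) (hJ' : IsPreconnected J)
    (hf : ∀ s ∈ I, ∀ t ∈ J, HasDerivAt (f s) (g s t) t)
    (hg : ∀ s ∈ I, ∀ t ∈ J, HasDerivAt (g · t) 0 s)
    {s s' t t' : ℝ} (hs : s ∈ I) (hs' : s' ∈ I) (ht : t ∈ J) (ht' : t' ∈ J) :
    f s t - f s t' - f s' t + f s' t' = 0 := by
  have hg_const : ∀ u ∈ J, g s u = g s' u := fun u hu =>
    hI.is_const_of_deriv_eq_zero hI'
      (fun v hv => (hg v hv u hu).differentiableAt.differentiableWithinAt)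
      (fun v hv => (hg v hv u hu).deriv) hs hs'
  have hfg : ∀ u ∈ J, HasDerivAt (fun u => f s u - f s' u) 0 u := fun u hu => by
    have := (hf s hs u hu).sub (hf s' hs' u hu)
    rwa [hg_const u hu, sub_self] at this
  have := hJ.is_const_of_deriv_eq_zero hJ'
    (fun u hu => (hfg u hu).differentiableAt.differentiableWithinAt)
    (fun u hu => (hfg u hu).deriv) ht ht'
  linarith

section MixedPartials

variable {X : Type*}

theorem isOpen_setOf_forall_pos [Finite X] : IsOpen {α : X → ℝ | ∀ z, 0 < α z} := by
  simp only [Set.ofPred_forall]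
  exact isOpen_iInter_of_finite fun z => isOpen_lt continuous_const (continuous_apply z)

variable [DecidableEq X]

theorem update_pos {p : X → ℝ} (hp : ∀ z, 0 < p z) (x : X) {a : ℝ} (ha : 0 < a) (z : X) :
    0 < update p x a z := by
  rcases eq_or_ne z x with rfl | h <;> simp [*]

variable [Fintype X]

theorem hasDerivAt_comp_update {F : Type*} [NormedAddCommGroup F] [NormedSpace ℝ F]
    {f : (X → ℝ) → F} {q : X → ℝ} {i : X} {t : ℝ} (hf : DifferentiableAt ℝ f (update q i t)) :
    HasDerivAt (fun s => f (update q i s)) (fderiv ℝ f (update q i t) (Pi.single i 1)) t :=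
  hf.hasFDerivAt.comp_hasDerivAt t (hasDerivAt_update q i t)

theorem mixed_difference_eq_zero {H : (X → ℝ) → ℝ}
    (hH : ContDiffOn ℝ 2 H {α : X → ℝ | ∀ z, 0 < α z}) {x y : X} (hxy : x ≠ y)
    (hmix : ∀ α : X → ℝ, (∀ z, 0 < α z) →
      fderiv ℝ (fun β => fderiv ℝ H β (Pi.single y 1)) α (Pi.single x 1) = 0)
    {p : X → ℝ} (hp : ∀ z, 0 < p z) {a b : ℝ} (ha : 0 < a) (hb : 0 < b) :
    H (update (update p x a) y b) - H (update p x a) - H (update p y b) + H p = 0 := by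
  have hS := isOpen_setOf_forall_pos (X := X)
  have hH₁ : ∀ β : X → ℝ, (∀ z, 0 < β z) → DifferentiableAt ℝ H β := fun β hβ =>
    (hH.differentiableOn (by norm_num) β hβ).differentiableAt (hS.mem_nhds hβ)
  have hH₂ : ∀ β : X → ℝ, (∀ z, 0 < β z) →
      DifferentiableAt ℝ (fun γ => fderiv ℝ H γ (Pi.single y 1)) β := fun β hβ =>
    (((hH.fderiv_of_isOpen hS (by norm_num)).differentiableOn one_ne_zero β hβ).differentiableAt
      (hS.mem_nhds hβ)).clm_apply (differentiableAt_const _)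
  have key := sub_sub_add_eq_zero_of_hasDerivAt (f := fun s t => H (update (update p x s) y t))
    (g := fun s t => fderiv ℝ H (update (update p x s) y t) (Pi.single y 1))
    isOpen_Ioi isPreconnected_Ioi isOpen_Ioi isPreconnected_Ioi
    (fun s hs t ht => hasDerivAt_comp_update (hH₁ _ (update_pos (update_pos hp x hs) y ht)))
    (fun s hs t ht => by
      simp_rw [update_comm hxy]
      have hpos := update_pos (update_pos hp y ht) x hs
      simpa [hmix _ hpos] using hasDerivAt_comp_update (hH₂ _ hpos))
    (Set.mem_Ioi.mpr ha) (Set.mem_Ioi.mpr (hp x)) (Set.mem_Ioi.mpr hb) (Set.mem_Ioi.mpr (hp y))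
  have hpy : update (update p x a) y (p y) = update p x a :=
    update_eq_self_iff.mpr (update_of_ne hxy.symm a p).symm
  simpa [hpy] using key

end MixedPartials

/-- A function whose mixed partials vanish across non-edges of a graph `G`
decomposes additively over the complete subsets of `G`. -/
theorem stmt_17 {X : Type*} [Fintype X] [DecidableEq X]
    (G : SimpleGraph X) [DecidableRel G.Adj]
    (H : (X → ℝ) → ℝ)
    (hH : ContDiffOn ℝ 2 H {α : X → ℝ | ∀ z, 0 < α z})
    (hmix : ∀ x y : X, x ≠ y → ¬ G.Adj x y → ∀ α : X → ℝ, (∀ z, 0 < α z) →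
      fderiv ℝ (fun β => fderiv ℝ H β (Pi.single y 1)) α (Pi.single x 1) = 0) :
    ∃ h : Finset X → (X → ℝ) → ℝ,
      (∀ B : Finset X, ∀ α β : X → ℝ, (∀ z, 0 < α z) → (∀ z, 0 < β z) →
        (∀ z ∈ B, α z = β z) → h B α = h B β)
      ∧ ∀ α : X → ℝ, (∀ z, 0 < α z) →
          H α = ∑ B ∈ Finset.univ.filter
              (fun B : Finset X => ∀ x ∈ B, ∀ y ∈ B, x ≠ y → G.Adj x y),
            h B α := by
  refine ⟨fun B α => subsetMoebius (fun A => H (A.piecewise α 1)) B, ?_, ?_⟩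
  · intro B α β _ _ hαβ
    refine sum_congr rfl fun A hA => ?_
    dsimp only
    rw [A.piecewise_congr (fun z hz => hαβ z (mem_powerset.mp hA hz)) fun _ _ => rfl]
  · intro α hα
    have hpos : ∀ A : Finset X, ∀ z, 0 < A.piecewise α 1 z := fun A z => by
      by_cases hz : z ∈ A <;> simp [hz, hα z]
    rw [sum_filter_of_ne, ← powerset_univ, sum_subsetMoebius_powerset, piecewise_univ]
    intro B _ hB
    by_contra! hcomplete
    obtain ⟨x, hx, y, hy, hxy, hadj⟩ := hcomplete
    refine hB (subsetMoebius_eq_zero hxy hx hy fun A _ _ => ?_)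
    have := mixed_difference_eq_zero hH hxy.symm (hmix y x hxy.symm fun h => hadj h.symm)
      (hpos A) (hα y) (hα x)
    simp only [piecewise_insert]
    linarith
end
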